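/- arXiv:1601.06034 — 2 statements merged into one kernel-verified Lean document; each statement's English description precedes it below -/
import Mathlib

section
/- Let $K\in\mathscr{C}^\infty(E_*)$ be a positive function satisfying the growth condition: there exist $0<r_1\leq 1\leq r_2$ with $K(\xi) > (m-1)/\|\xi\|$ whenever $\|\xi\|<r_1$ and $K(\xi)<(m-1)/\|\xi\|$ whenever $\|\xi\|>r_2$. Then every solution $u\in\mathscr{C}^3(\Sigma)$ of the fiberwise mean-curvature equation $\sum_{\alpha,\beta} B^{\alpha\beta}(u) D_{\alpha\beta}u = (m-1)(1+v_1) - (1+v_1)^{3/2}e^u K(e^u\xi)$, where $B^{\alpha\beta} = (1+v_1)G^{\alpha\beta} - D^\alpha u D^\beta u$ and $v_1 = D_\alpha u D^\alpha u$ is the squared vertical gradient, satisfies $r_1\leq e^u\leq r_2$ everywhere on $\Sigma$. -/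
/-!
STATEMENT 7.  `C⁰` a priori bounds from the growth condition.

Component model of the fiberwise (vertical) prescribed mean curvature equation on the
unit sphere bundle `Σ` (type `S`) of a rank-`m ≥ 2` Riemannian vector bundle: indices
`α : Fin (m-1)` label the vertical frame directions tangent to the fibre spheres (all
marked by `μ = 0`), `Ginv` are the components `Gᵅᵝ` of the inverse metric, `u ∈ C³(Σ)`
has vertical derivatives `Du`, `D2u`, and `K r ξ` encodes `K(rξ)`.  With `μ ≡ 0` the
general operators specialise to `Bᵅᵝ = (1+v₁)Gᵅᵝ - Dᵅu Dᵝu` and the equation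
`Bᵅᵝ D_{αβ}u = (m-1)(1+v₁) - (1+v₁)^{3/2} e^u K(e^u ξ)`.

Claim: if `K > 0` satisfies the growth condition `(1.1)` with `0 < r₁ ≤ 1 ≤ r₂`, then
every `C³` solution satisfies `r₁ ≤ e^u ≤ r₂` everywhere on `Σ`.
-/

noncomputable section

open scoped BigOperators

variable {S : Type} {N : ℕ}

/-- Rescaled lowered derivative `D̃_a u = e^{μ_a u} D_a u`. -/
def tDlow (μ : Fin N → ℝ) (u : S → ℝ) (Du : S → Fin N → ℝ) (ξ : S) (a : Fin N) : ℝ :=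
  Real.exp (μ a * u ξ) * Du ξ a

/-- Rescaled raised derivative `D̃ᵃ u = e^{μ_a u} Gᵃᵇ D_b u`. -/
def tDup (Ginv : S → Fin N → Fin N → ℝ) (μ : Fin N → ℝ) (u : S → ℝ)
    (Du : S → Fin N → ℝ) (ξ : S) (a : Fin N) : ℝ :=
  Real.exp (μ a * u ξ) * ∑ b, Ginv ξ a b * Du ξ b

/-- Vertical rescaled gradient square `v₁ = (1-μ_a) D̃_a u D̃ᵃ u`. -/
def vv1 (Ginv : S → Fin N → Fin N → ℝ) (μ : Fin N → ℝ) (u : S → ℝ)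
    (Du : S → Fin N → ℝ) (ξ : S) : ℝ :=
  ∑ a, (1 - μ a) * tDlow μ u Du ξ a * tDup Ginv μ u Du ξ a

/-- Horizontal rescaled gradient square `v₂ = μ_a D̃_a u D̃ᵃ u`. -/
def vv2 (Ginv : S → Fin N → Fin N → ℝ) (μ : Fin N → ℝ) (u : S → ℝ)
    (Du : S → Fin N → ℝ) (ξ : S) : ℝ :=
  ∑ a, μ a * tDlow μ u Du ξ a * tDup Ginv μ u Du ξ a

/-- `v = v₁ + v₂`. -/
def vv (Ginv : S → Fin N → Fin N → ℝ) (μ : Fin N → ℝ) (u : S → ℝ)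
    (Du : S → Fin N → ℝ) (ξ : S) : ℝ :=
  vv1 Ginv μ u Du ξ + vv2 Ginv μ u Du ξ

/-- Coefficients `Aᵃᵇ(u) = (1+v) Gᵃᵇ - D̃ᵃu D̃ᵇu` of the equation. -/
def Acoef (Ginv : S → Fin N → Fin N → ℝ) (μ : Fin N → ℝ) (u : S → ℝ)
    (Du : S → Fin N → ℝ) (ξ : S) (a b : Fin N) : ℝ :=
  (1 + vv Ginv μ u Du ξ) * Ginv ξ a b - tDup Ginv μ u Du ξ a * tDup Ginv μ u Du ξ b

/-- Rescaled Hessian `D̃_{ab} u = e^{(μ_a+μ_b) u} D_{ab} u`. -/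
def tD2 (μ : Fin N → ℝ) (u : S → ℝ) (D2u : S → Fin N → Fin N → ℝ)
    (ξ : S) (a b : Fin N) : ℝ :=
  Real.exp ((μ a + μ b) * u ξ) * D2u ξ a b

/-- Left-hand side `Aᵃᵇ(u) D̃_{ab}u` of the prescribed mean curvature equation. -/
def MCop (Ginv : S → Fin N → Fin N → ℝ) (μ : Fin N → ℝ) (u : S → ℝ)
    (Du : S → Fin N → ℝ) (D2u : S → Fin N → Fin N → ℝ) (ξ : S) : ℝ :=
  ∑ a, ∑ b, Acoef Ginv μ u Du ξ a b * tD2 μ u D2u ξ a b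

/-- Right-hand side `-v₂ + (m-1)(1+v) - (1+v)^{3/2} e^u K(e^u ξ)` of the equation;
here `K r ξ` stands for `K(rξ)`. -/
def RHSK (m : ℕ) (K : ℝ → S → ℝ) (Ginv : S → Fin N → Fin N → ℝ) (μ : Fin N → ℝ)
    (u : S → ℝ) (Du : S → Fin N → ℝ) (ξ : S) : ℝ :=
  -vv2 Ginv μ u Du ξ + ((m : ℝ) - 1) * (1 + vv Ginv μ u Du ξ)
    - (1 + vv Ginv μ u Du ξ) ^ ((3 : ℝ) / 2) * Real.exp (u ξ) * K (Real.exp (u ξ)) ξ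

/-- Positive definiteness of the (inverse) metric components. -/
def PosDefFam (Ginv : S → Fin N → Fin N → ℝ) : Prop :=
  ∀ (ξ : S) (w : Fin N → ℝ), w ≠ 0 → 0 < ∑ a, ∑ b, Ginv ξ a b * w a * w b

/-- Encoding of the second-order maximum principle data of a `C²` function on the compact
manifold `Σ`: at a maximum point the gradient vanishes and the Hessian is negative
semidefinite, at a minimum point the gradient vanishes and the Hessian is positive
semidefinite. -/
def MaxPrincipleData (u : S → ℝ) (Du : S → Fin N → ℝ)
    (D2u : S → Fin N → Fin N → ℝ) : Prop :=
  (∀ ξ : S, (∀ η, u η ≤ u ξ) →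
      (∀ a, Du ξ a = 0) ∧ ∀ w : Fin N → ℝ, ∑ a, ∑ b, D2u ξ a b * w a * w b ≤ 0)
  ∧ (∀ ξ : S, (∀ η, u ξ ≤ u η) →
      (∀ a, Du ξ a = 0) ∧ ∀ w : Fin N → ℝ, 0 ≤ ∑ a, ∑ b, D2u ξ a b * w a * w b)

/-! At a maximum point of `u` the gradient vanishes, so the equation collapses to
`Gᵅᵝ D_{αβ}u = (m-1) - e^u K(e^u ξ)`; the left side pairs the positive semidefinite `Gᵅᵝ` with
the negative semidefinite Hessian and is therefore `≤ 0`, which forces `e^u K(e^u ξ) ≥ m-1`, i.e.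
`e^u ≤ r₂` by the growth condition. The minimum point gives `e^u ≥ r₁` symmetrically. -/

/-- The vectors `v i` come from a decomposition `G = ∑ᵢ vᵢ vᵢᵀ`. -/
theorem Matrix.PosSemidef.exists_sum_mul_eq_sum_quadForm {n : Type*} [Fintype n]
    {G : Matrix n n ℝ} (hG : G.PosSemidef) :
    ∃ (k : ℕ) (v : Fin k → n → ℝ), ∀ D : n → n → ℝ,
      ∑ a, ∑ b, G a b * D a b = ∑ i, ∑ a, ∑ b, D a b * v i a * v i b := by
  obtain ⟨k, v, rfl⟩ := Matrix.posSemidef_iff_eq_sum_vecMulVec.mp hG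
  refine ⟨k, v, fun D => ?_⟩
  simp only [Matrix.sum_apply, Matrix.vecMulVec_apply, star_trivial, Finset.sum_mul]
  rw [Finset.sum_comm_cycle]
  exact Finset.sum_congr rfl fun i _ => Finset.sum_congr rfl fun a _ =>
    Finset.sum_congr rfl fun b _ => by ring

theorem Matrix.PosSemidef.sum_mul_nonpos {n : Type*} [Fintype n] {G : Matrix n n ℝ}
    (hG : G.PosSemidef) {D : n → n → ℝ} (hD : ∀ w : n → ℝ, ∑ a, ∑ b, D a b * w a * w b ≤ 0) :
    ∑ a, ∑ b, G a b * D a b ≤ 0 := by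
  obtain ⟨k, v, hv⟩ := hG.exists_sum_mul_eq_sum_quadForm
  rw [hv]
  exact Finset.sum_nonpos fun i _ => hD (v i)

theorem Matrix.PosSemidef.sum_mul_nonneg {n : Type*} [Fintype n] {G : Matrix n n ℝ}
    (hG : G.PosSemidef) {D : n → n → ℝ} (hD : ∀ w : n → ℝ, 0 ≤ ∑ a, ∑ b, D a b * w a * w b) :
    0 ≤ ∑ a, ∑ b, G a b * D a b := by
  obtain ⟨k, v, hv⟩ := hG.exists_sum_mul_eq_sum_quadForm
  rw [hv]
  exact Finset.sum_nonneg fun i _ => hD (v i)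

theorem PosDefFam.posSemidef {Ginv : S → Fin N → Fin N → ℝ} (hGpos : PosDefFam Ginv) {ξ : S}
    (hGsymm : ∀ a b, Ginv ξ a b = Ginv ξ b a) : (Matrix.of (Ginv ξ)).PosSemidef := by
  refine .of_dotProduct_mulVec_nonneg (Matrix.IsHermitian.ext fun a b => hGsymm b a) fun w => ?_
  rcases eq_or_ne w 0 with rfl | hw
  · simp
  · convert (hGpos ξ w hw).le using 1
    simp only [dotProduct, Matrix.mulVec, star_trivial, Matrix.of_apply, Finset.mul_sum]
    exact Finset.sum_congr rfl fun a _ => Finset.sum_congr rfl fun b _ => by ring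

section CriticalPoint

variable {Ginv : S → Fin N → Fin N → ℝ} {μ : Fin N → ℝ} {u : S → ℝ} {Du : S → Fin N → ℝ}
  {ξ : S}

theorem tDup_eq_zero_of_grad_eq_zero (h0 : ∀ a, Du ξ a = 0) (a : Fin N) :
    tDup Ginv μ u Du ξ a = 0 := by
  simp [tDup, h0]

theorem vv2_eq_zero_of_grad_eq_zero (h0 : ∀ a, Du ξ a = 0) : vv2 Ginv μ u Du ξ = 0 := by
  simp [vv2, tDlow, h0]

theorem vv_eq_zero_of_grad_eq_zero (h0 : ∀ a, Du ξ a = 0) : vv Ginv μ u Du ξ = 0 := by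
  simp [vv, vv1, vv2, tDlow, h0]

theorem MCop_eq_of_grad_eq_zero (D2u : S → Fin N → Fin N → ℝ) (h0 : ∀ a, Du ξ a = 0) :
    MCop Ginv μ u Du D2u ξ = ∑ a, ∑ b, Ginv ξ a b * tD2 μ u D2u ξ a b := by
  simp [MCop, Acoef, vv_eq_zero_of_grad_eq_zero h0, tDup_eq_zero_of_grad_eq_zero h0]

theorem RHSK_eq_of_grad_eq_zero (m : ℕ) (K : ℝ → S → ℝ) (h0 : ∀ a, Du ξ a = 0) :
    RHSK m K Ginv μ u Du ξ = ((m : ℝ) - 1) - Real.exp (u ξ) * K (Real.exp (u ξ)) ξ := by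
  simp [RHSK, vv_eq_zero_of_grad_eq_zero h0, vv2_eq_zero_of_grad_eq_zero h0]

end CriticalPoint

section MaximumPrinciple

variable {m : ℕ} {K : ℝ → S → ℝ} {Ginv : S → Fin N → Fin N → ℝ} {u : S → ℝ}
  {Du : S → Fin N → ℝ} {D2u : S → Fin N → Fin N → ℝ} {ξ : S}

theorem le_exp_mul_K_of_isMax (hGsymm : ∀ a b, Ginv ξ a b = Ginv ξ b a)
    (hGpos : PosDefFam Ginv) (hC2 : MaxPrincipleData u Du D2u)
    (hEq : MCop Ginv (fun _ => 0) u Du D2u ξ = RHSK m K Ginv (fun _ => 0) u Du ξ)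
    (hmax : ∀ η, u η ≤ u ξ) :
    (m : ℝ) - 1 ≤ Real.exp (u ξ) * K (Real.exp (u ξ)) ξ := by
  obtain ⟨hgrad, hHess⟩ := hC2.1 ξ hmax
  have hpair : ∑ a, ∑ b, Ginv ξ a b * D2u ξ a b ≤ 0 :=
    (hGpos.posSemidef hGsymm).sum_mul_nonpos hHess
  rw [MCop_eq_of_grad_eq_zero D2u hgrad, RHSK_eq_of_grad_eq_zero m K hgrad] at hEq
  simp only [tD2, add_zero, zero_mul, Real.exp_zero, one_mul] at hEq
  linarith

theorem exp_mul_K_le_of_isMin (hGsymm : ∀ a b, Ginv ξ a b = Ginv ξ b a)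
    (hGpos : PosDefFam Ginv) (hC2 : MaxPrincipleData u Du D2u)
    (hEq : MCop Ginv (fun _ => 0) u Du D2u ξ = RHSK m K Ginv (fun _ => 0) u Du ξ)
    (hmin : ∀ η, u ξ ≤ u η) :
    Real.exp (u ξ) * K (Real.exp (u ξ)) ξ ≤ (m : ℝ) - 1 := by
  obtain ⟨hgrad, hHess⟩ := hC2.2 ξ hmin
  have hpair : 0 ≤ ∑ a, ∑ b, Ginv ξ a b * D2u ξ a b :=
    (hGpos.posSemidef hGsymm).sum_mul_nonneg hHess
  rw [MCop_eq_of_grad_eq_zero D2u hgrad, RHSK_eq_of_grad_eq_zero m K hgrad] at hEq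
  simp only [tD2, add_zero, zero_mul, Real.exp_zero, one_mul] at hEq
  linarith

end MaximumPrinciple

theorem growth_condition_gives_C0_bounds_general
    (m : ℕ) (S : Type) [TopologicalSpace S] [CompactSpace S]
    (Ginv : S → Fin (m - 1) → Fin (m - 1) → ℝ)
    (hGsymm : ∀ ξ a b, Ginv ξ a b = Ginv ξ b a) (hGpos : PosDefFam Ginv)
    (K : ℝ → S → ℝ)
    (r₁ r₂ : ℝ)
    -- the growth condition (1.1)
    (hK1 : ∀ r : ℝ, 0 < r → r < r₁ → ∀ ξ : S, ((m : ℝ) - 1) / r < K r ξ)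
    (hK2 : ∀ r : ℝ, r₂ < r → ∀ ξ : S, K r ξ < ((m : ℝ) - 1) / r)
    (u : S → ℝ) (hu : Continuous u)
    (Du : S → Fin (m - 1) → ℝ) (D2u : S → Fin (m - 1) → Fin (m - 1) → ℝ)
    (hC2 : MaxPrincipleData u Du D2u)
    -- `u` solves the fiberwise equation (with `μ ≡ 0`: only vertical directions)
    (hEq : ∀ ξ : S, MCop Ginv (fun _ => 0) u Du D2u ξ
      = RHSK m K Ginv (fun _ => 0) u Du ξ) :
    ∀ ξ : S, r₁ ≤ Real.exp (u ξ) ∧ Real.exp (u ξ) ≤ r₂ := by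
  intro ξ
  obtain ⟨ξmax, -, hmax⟩ := isCompact_univ.exists_isMaxOn ⟨ξ, Set.mem_univ ξ⟩ hu.continuousOn
  obtain ⟨ξmin, -, hmin⟩ := isCompact_univ.exists_isMinOn ⟨ξ, Set.mem_univ ξ⟩ hu.continuousOn
  replace hmax : ∀ η, u η ≤ u ξmax := fun η => hmax (Set.mem_univ η)
  replace hmin : ∀ η, u ξmin ≤ u η := fun η => hmin (Set.mem_univ η)
  have hupper : Real.exp (u ξmax) ≤ r₂ := by
    by_contra! h
    have hK := hK2 _ h ξmax
    rw [lt_div_iff₀ (Real.exp_pos _)] at hK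
    linarith [le_exp_mul_K_of_isMax (hGsymm ξmax) hGpos hC2 (hEq ξmax) hmax]
  have hlower : r₁ ≤ Real.exp (u ξmin) := by
    by_contra! h
    have hK := hK1 _ (Real.exp_pos _) h ξmin
    rw [div_lt_iff₀ (Real.exp_pos _)] at hK
    linarith [exp_mul_K_le_of_isMin (hGsymm ξmin) hGpos hC2 (hEq ξmin) hmin]
  exact ⟨hlower.trans (Real.exp_le_exp.2 (hmin ξ)), (Real.exp_le_exp.2 (hmax ξ)).trans hupper⟩

theorem growth_condition_gives_C0_bounds
    (m : ℕ) (hm : 2 ≤ m) (S : Type) [TopologicalSpace S] [CompactSpace S] [Nonempty S]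
    (Ginv : S → Fin (m - 1) → Fin (m - 1) → ℝ)
    (hGsymm : ∀ ξ a b, Ginv ξ a b = Ginv ξ b a) (hGpos : PosDefFam Ginv)
    (K : ℝ → S → ℝ) (hKpos : ∀ r : ℝ, 0 < r → ∀ ξ, 0 < K r ξ)
    (r₁ r₂ : ℝ) (hr₁ : 0 < r₁) (hr₁1 : r₁ ≤ 1) (hr₂ : 1 ≤ r₂)
    -- the growth condition (1.1)
    (hK1 : ∀ r : ℝ, 0 < r → r < r₁ → ∀ ξ : S, ((m : ℝ) - 1) / r < K r ξ)
    (hK2 : ∀ r : ℝ, r₂ < r → ∀ ξ : S, K r ξ < ((m : ℝ) - 1) / r)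
    (u : S → ℝ) (hu : Continuous u)
    (Du : S → Fin (m - 1) → ℝ) (D2u : S → Fin (m - 1) → Fin (m - 1) → ℝ)
    (hC2 : MaxPrincipleData u Du D2u)
    -- `u` solves the fiberwise equation (with `μ ≡ 0`: only vertical directions)
    (hEq : ∀ ξ : S, MCop Ginv (fun _ => 0) u Du D2u ξ
      = RHSK m K Ginv (fun _ => 0) u Du ξ) :
    ∀ ξ : S, r₁ ≤ Real.exp (u ξ) ∧ Real.exp (u ξ) ≤ r₂ :=
  growth_condition_gives_C0_bounds_general m S Ginv hGsymm hGpos K r₁ r₂ hK1 hK2 u hu Du D2u hC2 hEq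
end
end

section
/- Necessity via the intermediate value theorem: If $K$ is a positive continuous function on $E_*$ with $K(\xi)=K(\|\xi\|)$ depending only on the radius, and there exists a $\mathscr{C}^2$ radial graph $\xi\mapsto e^{u(\xi)}\xi$ over $\Sigma$ with mean curvature $K$, then setting $r_1=\min_\Sigma e^u$ and $r_2=\max_\Sigma e^u$ one has $(m-1)/r_1 \geq K(r_1)$ and $(m-1)/r_2 \leq K(r_2)$, and hence by continuity there exists $r\in[r_1,r_2]$ with $K(r) = (m-1)/r$. -/
/-!
STATEMENT 12.  Necessity of a critical radius, via the intermediate value theorem.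

Component model of the prescribed mean curvature equation on the compact unit sphere
bundle `Σ` (type `S`), as before; here the prescribed function depends only on the
radius, `K : ℝ → ℝ`, `K r` standing for `K(rξ)` with `r = ‖rξ‖`.  A `C²` radial graph
`ξ ↦ e^{u(ξ)} ξ` with mean curvature `K` corresponds to a solution `(u, Du, D2u)` of
`Aᵃᵇ(u)D̃_{ab}u = -v₂ + (m-1)(1+v) - (1+v)^{3/2} e^u K(e^u)` with the
maximum-principle properties of a `C²` function on the compact manifold `Σ`.

Claim: setting `r₁ = min_Σ e^u` and `r₂ = max_Σ e^u`, one has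
`(m-1)/r₁ ≥ K(r₁)` and `(m-1)/r₂ ≤ K(r₂)`, hence by continuity of `K` there is
`r ∈ [r₁,r₂]` with `K(r) = (m-1)/r`.
-/

noncomputable section

open scoped BigOperators

variable {S : Type} {N : ℕ}

/-!
At an extremum of `u` the gradient vanishes, so `v = 0`, `Aᵃᵇ(u) = Gᵃᵇ` and the equation reduces
to `Gᵃᵇ D̃_{ab}u = (m-1) - e^u K(e^u)`. The rescaled Hessian `D̃_{ab}u` is the Hessian conjugated by
the positive diagonal matrix `diag(e^{μ_a u})`, so it keeps the sign of the Hessian, and the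
contraction of a positive semidefinite matrix with a form of a given sign has that sign. Hence
`r K(r) ≤ m-1` at the minimal radius and `r K(r) ≥ m-1` at the maximal one, and the intermediate
value theorem applied to `r ↦ r K(r)` gives the critical radius.
-/

open Set

namespace Matrix

variable {ι : Type*} [Fintype ι]

theorem PosSemidef.sum_sum_mul_nonneg {G : Matrix ι ι ℝ} (hG : G.PosSemidef) {H : ι → ι → ℝ}
    (hH : ∀ w : ι → ℝ, 0 ≤ ∑ a, ∑ b, H a b * w a * w b) :
    0 ≤ ∑ a, ∑ b, G a b * H a b := by
  obtain ⟨k, v, rfl⟩ := posSemidef_iff_eq_sum_vecMulVec.mp hG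
  calc 0 ≤ ∑ i, ∑ a, ∑ b, H a b * v i a * v i b := Finset.sum_nonneg fun i _ => hH (v i)
    _ = _ := by
      simp only [sum_apply, vecMulVec_apply, star_trivial, Finset.sum_mul]
      rw [Finset.sum_comm]
      refine Finset.sum_congr rfl fun a _ => ?_
      rw [Finset.sum_comm]
      exact Finset.sum_congr rfl fun b _ => Finset.sum_congr rfl fun i _ => by ring

theorem PosSemidef.sum_sum_mul_nonpos {G : Matrix ι ι ℝ} (hG : G.PosSemidef) {H : ι → ι → ℝ}
    (hH : ∀ w : ι → ℝ, ∑ a, ∑ b, H a b * w a * w b ≤ 0) :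
    ∑ a, ∑ b, G a b * H a b ≤ 0 := by
  have := hG.sum_sum_mul_nonneg (H := -H) fun w => by
    simpa only [Pi.neg_apply, neg_mul, Finset.sum_neg_distrib, neg_nonneg] using hH w
  simpa only [Pi.neg_apply, mul_neg, Finset.sum_neg_distrib, neg_nonneg] using this

end Matrix

theorem PosDefFam.posDef {Ginv : S → Fin N → Fin N → ℝ} (hG : PosDefFam Ginv) {ξ : S}
    (hsymm : ∀ a b, Ginv ξ a b = Ginv ξ b a) : (Matrix.of (Ginv ξ)).PosDef := by
  refine .of_dotProduct_mulVec_pos (.ext fun a b => by simp [hsymm]) fun w hw => ?_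
  rw [star_trivial, Matrix.dot_mulVec_eq_sum_sum, Finset.sum_comm]
  refine (hG ξ w hw).trans_eq
    (Finset.sum_congr rfl fun a _ => Finset.sum_congr rfl fun b _ => ?_)
  rw [Matrix.of_apply]
  ring

section CriticalPoint

variable {Ginv : S → Fin N → Fin N → ℝ} {μ : Fin N → ℝ} {u : S → ℝ} {Du : S → Fin N → ℝ}
  {ξ : S}

theorem sum_sum_tD2_mul (D2u : S → Fin N → Fin N → ℝ) (w : Fin N → ℝ) :
    ∑ a, ∑ b, tD2 μ u D2u ξ a b * w a * w b
      = ∑ a, ∑ b, D2u ξ a b * (Real.exp (μ a * u ξ) * w a) * (Real.exp (μ b * u ξ) * w b) := by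
  refine Finset.sum_congr rfl fun a _ => Finset.sum_congr rfl fun b _ => ?_
  rw [tD2, add_mul, Real.exp_add]
  ring

variable (hDu : ∀ a, Du ξ a = 0)
include hDu

theorem tDup_eq_zero (a : Fin N) : tDup Ginv μ u Du ξ a = 0 := by
  simp [tDup, hDu]

theorem vv2_eq_zero : vv2 Ginv μ u Du ξ = 0 := by
  simp [vv2, tDlow, hDu]

theorem vv_eq_zero : vv Ginv μ u Du ξ = 0 := by
  simp [vv, vv1, vv2, tDlow, hDu]

theorem MCop_eq_sum_sum (D2u : S → Fin N → Fin N → ℝ) :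
    MCop Ginv μ u Du D2u ξ = ∑ a, ∑ b, Ginv ξ a b * tD2 μ u D2u ξ a b := by
  simp [MCop, Acoef, vv_eq_zero hDu, tDup_eq_zero hDu]

theorem RHSK_eq_sub (m : ℕ) (K : ℝ → S → ℝ) :
    RHSK m K Ginv μ u Du ξ = ((m : ℝ) - 1) - Real.exp (u ξ) * K (Real.exp (u ξ)) ξ := by
  simp [RHSK, vv_eq_zero hDu, vv2_eq_zero hDu]

end CriticalPoint

section Extremum

variable {m : ℕ} {K : ℝ → S → ℝ} {Ginv : S → Fin N → Fin N → ℝ} {μ : Fin N → ℝ} {u : S → ℝ}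
  {Du : S → Fin N → ℝ} {D2u : S → Fin N → Fin N → ℝ} {ξ : S}

theorem exp_mul_le_of_forall_le (hsymm : ∀ a b, Ginv ξ a b = Ginv ξ b a) (hG : PosDefFam Ginv)
    (hC2 : MaxPrincipleData u Du D2u) (hEq : MCop Ginv μ u Du D2u ξ = RHSK m K Ginv μ u Du ξ)
    (hmin : ∀ η, u ξ ≤ u η) :
    Real.exp (u ξ) * K (Real.exp (u ξ)) ξ ≤ (m : ℝ) - 1 := by
  obtain ⟨hDu, hHess⟩ := hC2.2 ξ hmin
  have hMC : 0 ≤ MCop Ginv μ u Du D2u ξ := by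
    rw [MCop_eq_sum_sum hDu]
    exact (hG.posDef hsymm).posSemidef.sum_sum_mul_nonneg fun w => by
      rw [sum_sum_tD2_mul]; exact hHess _
  rw [hEq, RHSK_eq_sub hDu] at hMC
  linarith

theorem le_exp_mul_of_forall_ge (hsymm : ∀ a b, Ginv ξ a b = Ginv ξ b a) (hG : PosDefFam Ginv)
    (hC2 : MaxPrincipleData u Du D2u) (hEq : MCop Ginv μ u Du D2u ξ = RHSK m K Ginv μ u Du ξ)
    (hmax : ∀ η, u η ≤ u ξ) :
    (m : ℝ) - 1 ≤ Real.exp (u ξ) * K (Real.exp (u ξ)) ξ := by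
  obtain ⟨hDu, hHess⟩ := hC2.1 ξ hmax
  have hMC : MCop Ginv μ u Du D2u ξ ≤ 0 := by
    rw [MCop_eq_sum_sum hDu]
    exact (hG.posDef hsymm).posSemidef.sum_sum_mul_nonpos fun w => by
      rw [sum_sum_tD2_mul]; exact hHess _
  rw [hEq, RHSK_eq_sub hDu] at hMC
  linarith

end Extremum

theorem exists_mem_Icc_eq_div_of_mul_le {K : ℝ → ℝ} (hK : ContinuousOn K (Ioi 0)) {r₁ r₂ c : ℝ}
    (hr₁ : 0 < r₁) (h₁₂ : r₁ ≤ r₂) (h₁ : r₁ * K r₁ ≤ c) (h₂ : c ≤ r₂ * K r₂) :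
    ∃ r ∈ Icc r₁ r₂, K r = c / r := by
  have hcont : ContinuousOn (fun r => r * K r) (Icc r₁ r₂) :=
    continuousOn_id.mul (hK.mono fun r hr => hr₁.trans_le hr.1)
  obtain ⟨r, hr, hrK⟩ := intermediate_value_Icc h₁₂ hcont ⟨h₁, h₂⟩
  refine ⟨r, hr, ?_⟩
  rw [eq_div_iff (hr₁.trans_le hr.1).ne', ← hrK, mul_comm]

theorem radial_graph_forces_critical_radius_general
    (n m : ℕ) (S : Type) [TopologicalSpace S]
    [CompactSpace S] [Nonempty S]
    (μ : Fin (n + m - 1) → ℝ)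
    (Ginv : S → Fin (n + m - 1) → Fin (n + m - 1) → ℝ)
    (hGsymm : ∀ ξ a b, Ginv ξ a b = Ginv ξ b a) (hGpos : PosDefFam Ginv)
    (K : ℝ → ℝ)
    (hKcont : ContinuousOn K (Set.Ioi (0 : ℝ)))
    (u : S → ℝ) (hu : Continuous u)
    (Du : S → Fin (n + m - 1) → ℝ)
    (D2u : S → Fin (n + m - 1) → Fin (n + m - 1) → ℝ)
    (hC2 : MaxPrincipleData u Du D2u)
    -- `u` solves the equation with radial prescribed function `K`
    (hEq : ∀ ξ : S, MCop Ginv μ u Du D2u ξ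
      = RHSK m (fun r _ => K r) Ginv μ u Du ξ)
    (r₁ r₂ : ℝ)
    (hr₁ : r₁ = sInf (Set.range fun ξ : S => Real.exp (u ξ)))
    (hr₂ : r₂ = sSup (Set.range fun ξ : S => Real.exp (u ξ))) :
    K r₁ ≤ ((m : ℝ) - 1) / r₁
    ∧ ((m : ℝ) - 1) / r₂ ≤ K r₂
    ∧ ∃ r : ℝ, r ∈ Set.Icc r₁ r₂ ∧ K r = ((m : ℝ) - 1) / r := by
  obtain ⟨ξ₁, hmin⟩ := hu.exists_forall_le (by simp [Filter.cocompact_eq_bot])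
  obtain ⟨ξ₂, hmax⟩ := hu.exists_forall_ge (by simp [Filter.cocompact_eq_bot])
  have hr₁' : r₁ = Real.exp (u ξ₁) := hr₁ ▸ IsLeast.csInf_eq
    ⟨mem_range_self ξ₁, forall_mem_range.2 fun η => Real.exp_le_exp.2 (hmin η)⟩
  have hr₂' : r₂ = Real.exp (u ξ₂) := hr₂ ▸ IsGreatest.csSup_eq
    ⟨mem_range_self ξ₂, forall_mem_range.2 fun η => Real.exp_le_exp.2 (hmax η)⟩
  have h₁ : r₁ * K r₁ ≤ (m : ℝ) - 1 := by
    rw [hr₁']; exact exp_mul_le_of_forall_le (hGsymm ξ₁) hGpos hC2 (hEq ξ₁) hmin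
  have h₂ : (m : ℝ) - 1 ≤ r₂ * K r₂ := by
    rw [hr₂']; exact le_exp_mul_of_forall_ge (hGsymm ξ₂) hGpos hC2 (hEq ξ₂) hmax
  have hr₁pos : 0 < r₁ := hr₁' ▸ Real.exp_pos _
  have hr₂pos : 0 < r₂ := hr₂' ▸ Real.exp_pos _
  have h₁₂ : r₁ ≤ r₂ := by rw [hr₁', hr₂']; exact Real.exp_le_exp.2 (hmin ξ₂)
  refine ⟨?_, ?_, exists_mem_Icc_eq_div_of_mul_le hKcont hr₁pos h₁₂ h₁ h₂⟩
  · rwa [le_div_iff₀ hr₁pos, mul_comm]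
  · rwa [div_le_iff₀ hr₂pos, mul_comm]

theorem radial_graph_forces_critical_radius
    (n m : ℕ) (hn : 1 ≤ n) (hm : 2 ≤ m) (S : Type) [TopologicalSpace S]
    [CompactSpace S] [Nonempty S]
    (μ : Fin (n + m - 1) → ℝ) (hμ : ∀ a, μ a = 0 ∨ μ a = 1)
    (Ginv : S → Fin (n + m - 1) → Fin (n + m - 1) → ℝ)
    (hGsymm : ∀ ξ a b, Ginv ξ a b = Ginv ξ b a) (hGpos : PosDefFam Ginv)
    (K : ℝ → ℝ) (hKpos : ∀ r : ℝ, 0 < r → 0 < K r)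
    (hKcont : ContinuousOn K (Set.Ioi (0 : ℝ)))
    (u : S → ℝ) (hu : Continuous u)
    (Du : S → Fin (n + m - 1) → ℝ)
    (D2u : S → Fin (n + m - 1) → Fin (n + m - 1) → ℝ)
    (hC2 : MaxPrincipleData u Du D2u)
    -- `u` solves the equation with radial prescribed function `K`
    (hEq : ∀ ξ : S, MCop Ginv μ u Du D2u ξ
      = RHSK m (fun r _ => K r) Ginv μ u Du ξ)
    (r₁ r₂ : ℝ)
    (hr₁ : r₁ = sInf (Set.range fun ξ : S => Real.exp (u ξ)))
    (hr₂ : r₂ = sSup (Set.range fun ξ : S => Real.exp (u ξ))) :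
    K r₁ ≤ ((m : ℝ) - 1) / r₁
    ∧ ((m : ℝ) - 1) / r₂ ≤ K r₂
    ∧ ∃ r : ℝ, r ∈ Set.Icc r₁ r₂ ∧ K r = ((m : ℝ) - 1) / r :=
  radial_graph_forces_critical_radius_general n m S μ Ginv hGsymm hGpos K hKcont u hu Du D2u hC2 hEq
    r₁ r₂ hr₁ hr₂
end
end
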